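/- arXiv:2210.12632 — 2 statements merged into one kernel-verified Lean document; each statement's English description precedes it below -/
import Mathlib

section
/- Let Ω be a bounded measurable domain in hyperbolic space H^{n+1} and define Vol_w(Ω) = ∫_Ω cosh r dv and r_Ω by Vol(B(r_Ω)) = Vol(Ω), where B(r) is the geodesic ball of radius r centered at the origin. Then ∫_Ω cosh r dv ≥ (ω_n/(n+1)) sinh^{n+1}(r_Ω), with equality if and only if Ω = B(r_Ω) (up to measure zero). -/
open Real MeasureTheory Set

/-!
Let `ν` be hyperbolic volume and `B = B(r_Ω)`. Since `ν Ω = ν B`, also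
`ν (Ω \ B) = ν (B \ Ω)`, so for every constant `c`
`∫_Ω w dν - ∫_B w dν = ∫_{Ω \ B} (w - c) dν + ∫_{B \ Ω} (c - w) dν`.
With `w = cosh r` and `c = cosh r_Ω`, monotonicity of `cosh` makes both integrands positive
(off the null sphere `r = r_Ω`), which gives the inequality, and equality exactly when
`Ω \ B` and `B \ Ω` are null. Finally `∫_B cosh r dν = ω_n ∫_0^{r_Ω} cosh t sinh^n t dt`
`= ω_n sinh^{n+1} r_Ω / (n + 1)`.
-/

namespace MeasureTheory

variable {X : Type*} [MeasurableSpace X] {ν : Measure X} {f : X → ℝ} {s Ω B : Set X}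

theorem setIntegral_eq_zero_iff_of_pos_ae (hs : MeasurableSet s) (hf : IntegrableOn f s ν)
    (hpos : ∀ᵐ x ∂ν, x ∈ s → 0 < f x) : ∫ x in s, f x ∂ν = 0 ↔ ν s = 0 := by
  have hpos' : ∀ᵐ x ∂ν.restrict s, 0 < f x := (ae_restrict_iff' hs).2 hpos
  rw [integral_eq_zero_iff_of_nonneg_ae (hpos'.mono fun _ hx => hx.le) hf,
    ← Measure.restrict_apply_univ, Measure.measure_univ_eq_zero]
  constructor
  · intro hzero
    have hfalse : ∀ᵐ x ∂ν.restrict s, False := by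
      filter_upwards [hzero, hpos'] with x hx0 hx
      exact hx.ne' hx0
    simpa using hfalse
  · intro hs0
    simp [hs0, Filter.EventuallyEq]

theorem setIntegral_sub_setIntegral_eq_of_measure_eq (hΩ : MeasurableSet Ω)
    (hB : MeasurableSet B) (hvol : ν Ω = ν B) (hBfin : ν B ≠ ⊤)
    (hfΩ : IntegrableOn f Ω ν) (hfB : IntegrableOn f B ν) (c : ℝ) :
    ∫ x in Ω, f x ∂ν - ∫ x in B, f x ∂ν =
      ∫ x in Ω \ B, (f x - c) ∂ν + ∫ x in B \ Ω, (c - f x) ∂ν := by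
  have hΩfin : ν Ω ≠ ⊤ := hvol ▸ hBfin
  have hdiff : ν.real (Ω \ B) = ν.real (B \ Ω) := by
    rw [measureReal_def, measureReal_def, measure_sdiff_symm hΩ.nullMeasurableSet
      hB.nullMeasurableSet hvol (measure_ne_top_of_subset inter_subset_left hΩfin)]
  have hΩB := integral_inter_add_sdiff hB hfΩ
  have hBΩ := integral_inter_add_sdiff hΩ hfB
  rw [inter_comm] at hBΩ
  have hcΩB : IntegrableOn (fun _ => c) (Ω \ B) ν :=
    integrableOn_const (measure_ne_top_of_subset sdiff_subset hΩfin)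
  have hcBΩ : IntegrableOn (fun _ => c) (B \ Ω) ν :=
    integrableOn_const (measure_ne_top_of_subset sdiff_subset hBfin)
  rw [integral_sub (hfΩ.mono_set sdiff_subset) hcΩB,
    integral_sub hcBΩ (hfB.mono_set sdiff_subset), setIntegral_const, setIntegral_const, hdiff]
  linarith

variable {c : ℝ}

theorem setIntegral_le_setIntegral_of_measure_eq (hΩ : MeasurableSet Ω)
    (hB : MeasurableSet B) (hvol : ν Ω = ν B) (hBfin : ν B ≠ ⊤)
    (hfΩ : IntegrableOn f Ω ν) (hfB : IntegrableOn f B ν)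
    (hlow : ∀ᵐ x ∂ν, x ∈ B \ Ω → f x ≤ c) (hhigh : ∀ᵐ x ∂ν, x ∈ Ω \ B → c ≤ f x) :
    ∫ x in B, f x ∂ν ≤ ∫ x in Ω, f x ∂ν := by
  have hsplit := setIntegral_sub_setIntegral_eq_of_measure_eq hΩ hB hvol hBfin hfΩ hfB c
  have hΩB : 0 ≤ ∫ x in Ω \ B, (f x - c) ∂ν :=
    setIntegral_nonneg_ae (hΩ.diff hB) (hhigh.mono fun _ hx hmem => sub_nonneg.2 (hx hmem))
  have hBΩ : 0 ≤ ∫ x in B \ Ω, (c - f x) ∂ν :=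
    setIntegral_nonneg_ae (hB.diff hΩ) (hlow.mono fun _ hx hmem => sub_nonneg.2 (hx hmem))
  linarith

theorem setIntegral_eq_setIntegral_iff_of_measure_eq (hΩ : MeasurableSet Ω)
    (hB : MeasurableSet B) (hvol : ν Ω = ν B) (hBfin : ν B ≠ ⊤)
    (hfΩ : IntegrableOn f Ω ν) (hfB : IntegrableOn f B ν)
    (hlow : ∀ᵐ x ∂ν, x ∈ B \ Ω → f x < c) (hhigh : ∀ᵐ x ∂ν, x ∈ Ω \ B → c < f x) :
    ∫ x in Ω, f x ∂ν = ∫ x in B, f x ∂ν ↔ ν (symmDiff Ω B) = 0 := by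
  have hΩfin : ν Ω ≠ ⊤ := hvol ▸ hBfin
  have hposΩB : ∀ᵐ x ∂ν, x ∈ Ω \ B → 0 < f x - c :=
    hhigh.mono fun _ hx hmem => sub_pos.2 (hx hmem)
  have hposBΩ : ∀ᵐ x ∂ν, x ∈ B \ Ω → 0 < c - f x :=
    hlow.mono fun _ hx hmem => sub_pos.2 (hx hmem)
  have hintΩB : IntegrableOn (fun x => f x - c) (Ω \ B) ν :=
    (hfΩ.mono_set sdiff_subset).sub
      (integrableOn_const (measure_ne_top_of_subset sdiff_subset hΩfin))
  have hintBΩ : IntegrableOn (fun x => c - f x) (B \ Ω) ν :=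
    (integrableOn_const (measure_ne_top_of_subset sdiff_subset hBfin)).sub
      (hfB.mono_set sdiff_subset)
  rw [← sub_eq_zero, setIntegral_sub_setIntegral_eq_of_measure_eq hΩ hB hvol hBfin hfΩ hfB c,
    add_eq_zero_iff_of_nonneg
      (setIntegral_nonneg_ae (hΩ.diff hB) (hposΩB.mono fun _ hx hmem => (hx hmem).le))
      (setIntegral_nonneg_ae (hB.diff hΩ) (hposBΩ.mono fun _ hx hmem => (hx hmem).le)),
    setIntegral_eq_zero_iff_of_pos_ae (hΩ.diff hB) hintΩB hposΩB,
    setIntegral_eq_zero_iff_of_pos_ae (hB.diff hΩ) hintBΩ hposBΩ, Set.symmDiff_def,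
    measure_union_null_iff]

end MeasureTheory

theorem integral_cosh_mul_sinh_pow (a b : ℝ) (n : ℕ) :
    ∫ t in a..b, cosh t * sinh t ^ n = (sinh b ^ (n + 1) - sinh a ^ (n + 1)) / (n + 1) := by
  have hsubst := intervalIntegral.integral_comp_mul_deriv (a := a) (b := b) (g := fun y => y ^ n)
    (fun t _ => hasDerivAt_sinh t) continuous_cosh.continuousOn (continuous_pow n)
  simp only [Function.comp_def] at hsubst
  rw [← integral_pow, ← hsubst]
  simp only [mul_comm (cosh _)]

/-- Hyperbolic volume on `H^{n+1}` in polar coordinates `S × [0, ∞)`, where `(S, σ)` models the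
unit sphere `S^n`: the volume element is `sinh^n r dr dσ`. -/
noncomputable def polarVolume {S : Type*} [MeasurableSpace S] (σ : Measure S) (n : ℕ) :
    Measure (S × ℝ) :=
  (σ.prod volume).withDensity fun x => ENNReal.ofReal (sinh x.2 ^ n)

section PolarVolume

variable {S : Type*} [MeasurableSpace S] {σ : Measure S} {n : ℕ} {T : Set (S × ℝ)}

theorem setIntegral_polarVolume (hT : MeasurableSet T) (hT0 : T ⊆ univ ×ˢ Ici 0)
    (g : S × ℝ → ℝ) :
    ∫ x in T, g x ∂polarVolume σ n = ∫ x in T, g x * sinh x.2 ^ n ∂σ.prod volume := by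
  rw [polarVolume, setIntegral_withDensity_eq_setIntegral_toReal_smul (by fun_prop)
    (ae_of_all _ fun _ => ENNReal.ofReal_lt_top) g hT]
  refine setIntegral_congr_fun hT fun x hx => ?_
  rw [ENNReal.toReal_ofReal (pow_nonneg (sinh_nonneg_iff.2 (hT0 hx).2) n), smul_eq_mul, mul_comm]

theorem polarVolume_real_eq_integral (hT : MeasurableSet T) (hT0 : T ⊆ univ ×ˢ Ici 0) :
    (polarVolume σ n).real T = ∫ x in T, sinh x.2 ^ n ∂σ.prod volume := by
  simpa using setIntegral_polarVolume (σ := σ) (n := n) hT hT0 fun _ => 1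

theorem polarVolume_univ_prod_Icc_ne_top [IsFiniteMeasure σ] (M : ℝ) :
    polarVolume σ n (univ ×ˢ Icc 0 M) ≠ ⊤ := by
  rw [polarVolume, withDensity_apply _ (MeasurableSet.univ.prod measurableSet_Icc)]
  refine ne_top_of_le_ne_top ?_
    (setLIntegral_mono (measurable_const (a := ENNReal.ofReal (sinh M ^ n)))
      fun x hx => ENNReal.ofReal_le_ofReal ?_)
  · rw [setLIntegral_const, Measure.prod_prod, Real.volume_Icc]
    finiteness
  · exact pow_le_pow_left₀ (sinh_nonneg_iff.2 hx.2.1) (sinh_le_sinh.2 hx.2.2) n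

theorem integrableOn_polarVolume [IsFiniteMeasure σ] {f : ℝ → ℝ} (hf : Continuous f)
    {M : ℝ} (hT : T ⊆ univ ×ˢ Icc 0 M) : IntegrableOn (fun x => f x.2) T (polarVolume σ n) := by
  obtain ⟨C, hC⟩ :=
    (isCompact_Icc (a := 0) (b := M)).exists_bound_of_continuousOn hf.continuousOn
  refine (Measure.integrableOn_of_bounded (M := C) (polarVolume_univ_prod_Icc_ne_top M)
    (hf.measurable.comp measurable_snd).aestronglyMeasurable ?_).mono_set hT
  exact (ae_restrict_iff' (MeasurableSet.univ.prod measurableSet_Icc)).2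
    (ae_of_all _ fun x hx => hC x.2 hx.2)

theorem polarVolume_ae_snd_ne [SFinite σ] (r : ℝ) : ∀ᵐ x ∂polarVolume σ n, x.2 ≠ r :=
  (withDensity_absolutelyContinuous _ _).ae_le
    (Measure.quasiMeasurePreserving_snd.ae (volume.ae_ne r))

theorem setIntegral_polarVolume_ball [SFinite σ] {r : ℝ} (hr : 0 ≤ r) (f : ℝ → ℝ) :
    ∫ x in univ ×ˢ Ico 0 r, f x.2 ∂polarVolume σ n =
      σ.real univ * ∫ t in 0..r, f t * sinh t ^ n := by
  rw [setIntegral_polarVolume (MeasurableSet.univ.prod measurableSet_Ico)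
    (prod_mono subset_rfl Ico_subset_Ici_self)]
  have hfubini := setIntegral_prod_mul (μ := σ) (ν := volume) (fun _ => (1 : ℝ))
    (fun t => f t * sinh t ^ n) univ (Ico 0 r)
  simp only [one_mul, Measure.restrict_univ, integral_const, smul_eq_mul, mul_one] at hfubini
  rw [hfubini, intervalIntegral.integral_of_le hr, integral_Ico_eq_integral_Ioc]

theorem polarVolume_real_ball [SFinite σ] {r : ℝ} (hr : 0 ≤ r) :
    (polarVolume σ n).real (univ ×ˢ Ico 0 r) = σ.real univ * ∫ t in 0..r, sinh t ^ n := by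
  simpa using setIntegral_polarVolume_ball (σ := σ) (n := n) hr fun _ => 1

theorem setIntegral_cosh_polarVolume_ball [SFinite σ] {r : ℝ} (hr : 0 ≤ r) :
    ∫ x in univ ×ˢ Ico 0 r, cosh x.2 ∂polarVolume σ n =
      σ.real univ / (n + 1) * sinh r ^ (n + 1) := by
  rw [setIntegral_polarVolume_ball hr, integral_cosh_mul_sinh_pow, sinh_zero,
    zero_pow n.succ_ne_zero, sub_zero]
  ring

theorem ae_cosh_lt_of_mem_sdiff_ball [SFinite σ] {r : ℝ} (hr : 0 ≤ r)
    (hT0 : T ⊆ univ ×ˢ Ici 0) :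
    ∀ᵐ x ∂polarVolume σ n, x ∈ T \ univ ×ˢ Ico 0 r → cosh r < cosh x.2 := by
  filter_upwards [polarVolume_ae_snd_ne r] with x hne hx
  have hx0 : 0 ≤ x.2 := (hT0 hx.1).2
  have hrx : r ≤ x.2 := not_lt.1 fun hlt => hx.2 ⟨trivial, hx0, hlt⟩
  exact cosh_strictMonoOn hr hx0 (lt_of_le_of_ne hrx hne.symm)

end PolarVolume

theorem stmt_8_general {n : ℕ} {S : Type*} [MeasurableSpace S] (σ : Measure S)
    (ωn : ℝ) (hω : 0 < ωn) (hS : σ Set.univ = ENNReal.ofReal ωn)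
    (Ω : Set (S × ℝ)) (hΩmeas : MeasurableSet Ω)
    (Rmax : ℝ) (hbdd : Ω ⊆ Set.univ ×ˢ Set.Icc (0 : ℝ) Rmax)
    (rΩ : ℝ) (hrΩ : 0 ≤ rΩ)
    (hvol : ∫ x in Ω, Real.sinh x.2 ^ n ∂(σ.prod volume) =
      ωn * ∫ t in (0:ℝ)..rΩ, Real.sinh t ^ n) :
    (ωn / (n + 1)) * Real.sinh rΩ ^ (n + 1) ≤
        ∫ x in Ω, Real.cosh x.2 * Real.sinh x.2 ^ n ∂(σ.prod volume) ∧
      ((∫ x in Ω, Real.cosh x.2 * Real.sinh x.2 ^ n ∂(σ.prod volume) =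
          (ωn / (n + 1)) * Real.sinh rΩ ^ (n + 1)) ↔
        ((σ.prod volume).withDensity
            (fun x => ENNReal.ofReal (Real.sinh x.2 ^ n)))
          (symmDiff Ω (Set.univ ×ˢ Set.Ico (0 : ℝ) rΩ)) = 0) := by
  have : IsFiniteMeasure σ := ⟨by simp [hS]⟩
  have hσ : σ.real univ = ωn := by simp [measureReal_def, hS, hω.le]
  set B := univ ×ˢ Ico (0 : ℝ) rΩ
  have hBmeas : MeasurableSet B := MeasurableSet.univ.prod measurableSet_Ico
  have hBbdd : B ⊆ univ ×ˢ Icc 0 rΩ := prod_mono subset_rfl Ico_subset_Icc_self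
  have hΩ0 : Ω ⊆ univ ×ˢ Ici 0 := hbdd.trans (prod_mono subset_rfl Icc_subset_Ici_self)
  have hBfin : polarVolume σ n B ≠ ⊤ :=
    measure_ne_top_of_subset hBbdd (polarVolume_univ_prod_Icc_ne_top rΩ)
  have hvolB : polarVolume σ n Ω = polarVolume σ n B := by
    rw [← ENNReal.toReal_eq_toReal_iff' (measure_ne_top_of_subset hbdd
      (polarVolume_univ_prod_Icc_ne_top Rmax)) hBfin, ← measureReal_def, ← measureReal_def,
      polarVolume_real_eq_integral hΩmeas hΩ0, polarVolume_real_ball hrΩ, hσ, hvol]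
  have hlow : ∀ᵐ x ∂polarVolume σ n, x ∈ B \ Ω → cosh x.2 < cosh rΩ :=
    ae_of_all _ fun x hx => cosh_strictMonoOn hx.1.2.1 hrΩ hx.1.2.2
  have hhigh := ae_cosh_lt_of_mem_sdiff_ball (σ := σ) (n := n) hrΩ hΩ0
  have hintΩ := integrableOn_polarVolume (n := n) (σ := σ) continuous_cosh hbdd
  have hintB := integrableOn_polarVolume (n := n) (σ := σ) continuous_cosh hBbdd
  rw [← setIntegral_polarVolume hΩmeas hΩ0, ← hσ, ← setIntegral_cosh_polarVolume_ball hrΩ]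
  exact ⟨setIntegral_le_setIntegral_of_measure_eq hΩmeas hBmeas hvolB hBfin hintΩ hintB
      (hlow.mono fun _ h hx => (h hx).le) (hhigh.mono fun _ h hx => (h hx).le),
    setIntegral_eq_setIntegral_iff_of_measure_eq hΩmeas hBmeas hvolB hBfin hintΩ hintB
      hlow hhigh⟩

/-- Hyperbolic space `H^{n+1}` in polar coordinates, modeled as `S × [0,∞)` where
`(S, σ)` stands for the unit sphere `S^n` with total area `ωn`; the hyperbolic volume
element is `sinh^n r dr dσ` and the weighted volume uses the weight `cosh r`. -/
theorem stmt_8 {n : ℕ} {S : Type*} [MeasurableSpace S] (σ : Measure S)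
    (ωn : ℝ) (hω : 0 < ωn) (hS : σ Set.univ = ENNReal.ofReal ωn)
    (Ω : Set (S × ℝ)) (hΩmeas : MeasurableSet Ω)
    (hΩsub : Ω ⊆ Set.univ ×ˢ Set.Ici (0 : ℝ))
    (Rmax : ℝ) (hbdd : Ω ⊆ Set.univ ×ˢ Set.Icc (0 : ℝ) Rmax)
    (rΩ : ℝ) (hrΩ : 0 ≤ rΩ)
    (hvol : ∫ x in Ω, Real.sinh x.2 ^ n ∂(σ.prod volume) =
      ωn * ∫ t in (0:ℝ)..rΩ, Real.sinh t ^ n) :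
    (ωn / (n + 1)) * Real.sinh rΩ ^ (n + 1) ≤
        ∫ x in Ω, Real.cosh x.2 * Real.sinh x.2 ^ n ∂(σ.prod volume) ∧
      ((∫ x in Ω, Real.cosh x.2 * Real.sinh x.2 ^ n ∂(σ.prod volume) =
          (ωn / (n + 1)) * Real.sinh rΩ ^ (n + 1)) ↔
        ((σ.prod volume).withDensity
            (fun x => ENNReal.ofReal (Real.sinh x.2 ^ n)))
          (symmDiff Ω (Set.univ ×ˢ Set.Ico (0 : ℝ) rΩ)) = 0) :=
  stmt_8_general σ ωn hω hS Ω hΩmeas Rmax hbdd rΩ hrΩ hvol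
end

section
/- For a star-shaped C¹ hypersurface Σ̂ ⊂ ℝ^{n+1} given as a radial graph ρ = ρ(θ) over S^n, with support function û = ρ²/√(ρ² + |Dρ|²): if Λ : (0,∞) → [0,∞) is non-decreasing and Λ(ρ(θ))·û(θ) is constant on S^n, then ρ is constant, i.e. Σ̂ is a round sphere centered at the origin. -/
open Real Set

/-- If `Λ(ρ)·û` is constant on a compact parameter space (the sphere `S^n`), where
`û = ρ²/√(ρ² + D²)` is the Euclidean support function of the radial graph `ρ` and
`D = |Dρ|` vanishes at extremum points of `ρ`, then `ρ` is constant, i.e. the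
hypersurface is a round sphere centered at the origin. -/
theorem stmt_18 {S : Type*} [TopologicalSpace S] [CompactSpace S] [Nonempty S]
    (ρ : S → ℝ) (hρcont : Continuous ρ) (hρpos : ∀ θ, 0 < ρ θ)
    (D : S → ℝ) (hDnonneg : ∀ θ, 0 ≤ D θ)
    (hcrit : ∀ θ, (IsMaxOn ρ Set.univ θ ∨ IsMinOn ρ Set.univ θ) → D θ = 0)
    (Λ : ℝ → ℝ) (hΛmono : MonotoneOn Λ (Set.Ioi (0 : ℝ)))
    (hΛpos : ∀ t > (0 : ℝ), 0 < Λ t)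
    (c : ℝ)
    (hconst : ∀ θ, Λ (ρ θ) * (ρ θ ^ 2 / Real.sqrt (ρ θ ^ 2 + D θ ^ 2)) = c) :
    ∃ c₀ : ℝ, ∀ θ, ρ θ = c₀ := by
  obtain ⟨θM, hθM⟩ := isCompact_univ.exists_isMaxOn univ_nonempty hρcont.continuousOn
  obtain ⟨θm, hθm⟩ := isCompact_univ.exists_isMinOn univ_nonempty hρcont.continuousOn
  have hval : ∀ θ, D θ = 0 → Λ (ρ θ) * ρ θ = c := by
    intro θ hD
    have := hconst θ
    rw [hD] at this
    have hpos := hρpos θ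
    rw [show ρ θ ^ 2 + 0 ^ 2 = ρ θ ^ 2 by ring,
      Real.sqrt_sq hpos.le] at this
    field_simp at this
    nlinarith [this]
  have hM : Λ (ρ θM) * ρ θM = c := hval θM (hcrit θM (Or.inl hθM.2))
  have hm : Λ (ρ θm) * ρ θm = c := hval θm (hcrit θm (Or.inr hθm.2))
  have hle : ρ θm ≤ ρ θM := hθM.2 (Set.mem_univ θm)
  have heq : ρ θm = ρ θM := by
    by_contra hne
    have hlt : ρ θm < ρ θM := lt_of_le_of_ne hle hne
    have h1 : Λ (ρ θm) ≤ Λ (ρ θM) := hΛmono (hρpos θm) (hρpos θM) hle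
    have h2 : Λ (ρ θm) * ρ θm < Λ (ρ θM) * ρ θM := by
      have := hΛpos (ρ θm) (hρpos θm)
      nlinarith [mul_lt_mul_of_pos_left hlt this, mul_le_mul_of_nonneg_right h1 (hρpos θM).le]
    rw [hM, hm] at h2
    exact lt_irrefl c h2
  refine ⟨ρ θm, fun θ => le_antisymm ?_ ?_⟩
  · exact heq ▸ hθM.2 (Set.mem_univ θ)
  · exact hθm.2 (Set.mem_univ θ)
end
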